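/- Suppose f satisfies condition (H_BF) with constant C_Q and sub-quadratic function κ, and suppose σ(t,x) is invertible with |σ^{-1}(t,x)b(t,x,y,z)| ≤ C_1(1+|z|) for all arguments. Define, for each i, D(z) := 1 + |z^i||z| + Σ_{j<i}|z^j|² + κ(|z|), l^i(t,x,y,z) := (f^i(t,x,y,z)/D(z))·(z^i|z|/|z^i|)·1_{z^i≠0} + σ^{-1}(t,x)b(t,x,y,z), q^i(t,x,y,z) := (f^i(t,x,y,z)/D(z))·(1+Σ_{j<i}|z^j|²), and s^i(t,x,y,z) := (f^i(t,x,y,z)/D(z))·κ(|z|). Then F^i(t,x,y,z) = z^i · l^i(t,x,y,z) + q^i(t,x,y,z) + s^i(t,x,y,z) for all (t,x,y,z), and there is a constant C depending only on C_Q and C_1 with |l^i(t,x,y,z)| ≤ C(1+|z|), |q^i(t,x,y,z)| ≤ C(1+Σ_{j<i}|z^j|²), and |s^i(t,x,y,z)| ≤ C κ(|z|) for all i and all (t,x,y,z). -/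

import Mathlib

open Set

noncomputable section

/-- `ℝ^d` with the Euclidean norm. -/
abbrev Ed (d : ℕ) := EuclideanSpace ℝ (Fin d)

/-- Real inner product on Euclidean space. -/
def dotE {m : ℕ} (x y : Ed m) : ℝ := inner ℝ x y

/-- Euclidean norm of a tuple `z = (z^1, …, z^n) ∈ (ℝ^d)^n`. -/
def znorm {n d : ℕ} (z : Fin n → Ed d) : ℝ := Real.sqrt (∑ i, ‖z i‖ ^ 2)

/-- A `d × d` matrix acting on a Euclidean vector. -/
def mvE {d : ℕ} (M : Matrix (Fin d) (Fin d) ℝ) (w : Ed d) : Ed d :=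
  (EuclideanSpace.equiv (Fin d) ℝ).symm (M.mulVec (EuclideanSpace.equiv (Fin d) ℝ w))

/-- The denominator `D(z) = 1 + |z^i||z| + Σ_{j<i} |z^j|² + κ(|z|)`. -/
def Dden {n d : ℕ} (κ : ℝ → ℝ) (i : Fin n) (z : Fin n → Ed d) : ℝ :=
  1 + ‖z i‖ * znorm z + ∑ j ∈ Finset.univ.filter (· < i), ‖z j‖ ^ 2 + κ (znorm z)

/-- The vector `(z^i |z| / |z^i|) · 1_{z^i ≠ 0}`. -/
def dir {d n : ℕ} (i : Fin n) (z : Fin n → Ed d) : Ed d :=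
  if ‖z i‖ = 0 then 0 else (znorm z / ‖z i‖) • z i

/-- Under (H_BF) and the bound `|σ⁻¹ b| ≤ C₁(1+|z|)`, the driver
`F^i = f^i + z^i · σ⁻¹b` decomposes as `F^i = z^i · l^i + q^i + s^i` with
`|l^i| ≤ C(1+|z|)`, `|q^i| ≤ C(1+Σ_{j<i}|z^j|²)` and `|s^i| ≤ C κ(|z|)`, where `C`
depends only on `C_Q` and `C₁`. -/
theorem stmt6 (d n : ℕ) (T : ℝ) (hT : 0 < T) (CQ C1 : ℝ) (hCQ : 0 < CQ) (hC1 : 0 < C1) :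
    ∃ C : ℝ,
      ∀ (σ σinv : ℝ → Ed d → Matrix (Fin d) (Fin d) ℝ)
        (b : ℝ → Ed d → Ed n → (Fin n → Ed d) → Ed d)
        (f : ℝ → Ed d → Ed n → (Fin n → Ed d) → Ed n)
        (κ : ℝ → ℝ),
        -- `σinv` is a two-sided inverse of `σ`
        (∀ t ∈ Icc (0:ℝ) T, ∀ x : Ed d,
          σ t x * σinv t x = 1 ∧ σinv t x * σ t x = 1) →
        -- `κ` is nonnegative and sub-quadratic
        (∀ r, 0 ≤ κ r) →
        Filter.Tendsto (fun r => κ r / r ^ 2) Filter.atTop (nhds 0) →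
        -- condition (H_BF) with constant `C_Q` and function `κ`
        (∀ i : Fin n, ∀ t ∈ Icc (0:ℝ) T, ∀ (x : Ed d) (y : Ed n) (z : Fin n → Ed d),
          |f t x y z i| ≤ CQ * Dden κ i z) →
        -- `|σ⁻¹(t,x) b(t,x,y,z)| ≤ C₁ (1 + |z|)`
        (∀ t ∈ Icc (0:ℝ) T, ∀ (x : Ed d) (y : Ed n) (z : Fin n → Ed d),
          ‖mvE (σinv t x) (b t x y z)‖ ≤ C1 * (1 + znorm z)) →
        ∀ i : Fin n, ∀ t ∈ Icc (0:ℝ) T, ∀ (x : Ed d) (y : Ed n) (z : Fin n → Ed d),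
          -- the decomposition `F^i = z^i · l^i + q^i + s^i`
          f t x y z i + dotE (z i) (mvE (σinv t x) (b t x y z)) =
            dotE (z i)
              ((f t x y z i / Dden κ i z) • dir i z + mvE (σinv t x) (b t x y z)) +
            (f t x y z i / Dden κ i z) *
              (1 + ∑ j ∈ Finset.univ.filter (· < i), ‖z j‖ ^ 2) +
            (f t x y z i / Dden κ i z) * κ (znorm z) ∧
          -- `|l^i| ≤ C (1 + |z|)`
          ‖(f t x y z i / Dden κ i z) • dir i z + mvE (σinv t x) (b t x y z)‖ ≤
            C * (1 + znorm z) ∧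
          -- `|q^i| ≤ C (1 + Σ_{j<i} |z^j|²)`
          |(f t x y z i / Dden κ i z) *
              (1 + ∑ j ∈ Finset.univ.filter (· < i), ‖z j‖ ^ 2)| ≤
            C * (1 + ∑ j ∈ Finset.univ.filter (· < i), ‖z j‖ ^ 2) ∧
          -- `|s^i| ≤ C κ(|z|)`
          |(f t x y z i / Dden κ i z) * κ (znorm z)| ≤ C * κ (znorm z) := by
  refine ⟨CQ + C1, ?_⟩
  intro σ σinv b f κ hσ hκ0 hκsub hf hb i t ht x y z
  set v := mvE (σinv t x) (b t x y z) with hv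
  set F := f t x y z i with hFdef
  set S := ∑ j ∈ Finset.univ.filter (· < i), ‖z j‖ ^ 2 with hSdef
  have hS : 0 ≤ S := Finset.sum_nonneg fun j _ => sq_nonneg _
  have hzn : 0 ≤ znorm z := Real.sqrt_nonneg _
  have hD1 : (1:ℝ) ≤ Dden κ i z := by
    have h1 := mul_nonneg (norm_nonneg (z i)) hzn
    have h2 := hκ0 (znorm z)
    unfold Dden
    rw [← hSdef]
    linarith
  have hDpos : 0 < Dden κ i z := lt_of_lt_of_le one_pos hD1
  have hFb : |F| ≤ CQ * Dden κ i z := hf i t ht x y z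
  have hr : |F / Dden κ i z| ≤ CQ := by
    rw [abs_div, abs_of_pos hDpos, div_le_iff₀ hDpos]
    exact hFb
  have hdirnorm : ‖dir i z‖ ≤ znorm z := by
    unfold dir
    split
    · simpa using hzn
    · next h =>
      have hzi0 : 0 < ‖z i‖ := lt_of_le_of_ne (norm_nonneg _) (Ne.symm h)
      rw [norm_smul, Real.norm_eq_abs, abs_of_nonneg (div_nonneg hzn (norm_nonneg _)),
        div_mul_cancel₀ _ hzi0.ne']
  have hinner : dotE (z i) (dir i z) = ‖z i‖ * znorm z := by
    unfold dotE dir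
    split
    · next h =>
      have hz : z i = 0 := norm_eq_zero.mp h
      simp [hz]
    · next h =>
      have hzi0 : 0 < ‖z i‖ := lt_of_le_of_ne (norm_nonneg _) (Ne.symm h)
      rw [real_inner_smul_right, real_inner_self_eq_norm_sq]
      field_simp
  have hvb : ‖v‖ ≤ C1 * (1 + znorm z) := hb t ht x y z
  refine ⟨?_, ?_, ?_, ?_⟩
  · have hsplit : dotE (z i) ((F / Dden κ i z) • dir i z + v) =
        (F / Dden κ i z) * (‖z i‖ * znorm z) + dotE (z i) v := by
      unfold dotE
      rw [inner_add_right, real_inner_smul_right]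
      rw [show (inner ℝ (z i) (dir i z) : ℝ) = ‖z i‖ * znorm z from hinner]
    rw [hsplit]
    have hDne : Dden κ i z ≠ 0 := hDpos.ne'
    have hexp : Dden κ i z = 1 + ‖z i‖ * znorm z + S + κ (znorm z) := rfl
    field_simp
    rw [hexp]
    ring
  · have h1 : ‖(F / Dden κ i z) • dir i z + v‖ ≤
        |F / Dden κ i z| * ‖dir i z‖ + ‖v‖ := by
      calc ‖(F / Dden κ i z) • dir i z + v‖ ≤ ‖(F / Dden κ i z) • dir i z‖ + ‖v‖ :=
            norm_add_le _ _
        _ = |F / Dden κ i z| * ‖dir i z‖ + ‖v‖ := by rw [norm_smul, Real.norm_eq_abs]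
    have h2 : |F / Dden κ i z| * ‖dir i z‖ ≤ CQ * znorm z :=
      mul_le_mul hr hdirnorm (norm_nonneg _) hCQ.le
    nlinarith
  · rw [abs_mul, abs_of_nonneg (by linarith : (0:ℝ) ≤ 1 + S)]
    have : |F / Dden κ i z| * (1 + S) ≤ CQ * (1 + S) :=
      mul_le_mul_of_nonneg_right hr (by linarith)
    nlinarith
  · rw [abs_mul, abs_of_nonneg (hκ0 _)]
    have h2 := hκ0 (znorm z)
    have : |F / Dden κ i z| * κ (znorm z) ≤ CQ * κ (znorm z) :=
      mul_le_mul_of_nonneg_right hr h2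
    nlinarith

end
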